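/- Completeness of K+.2 from premises: let the sets of propositional symbols and of agent labels be countable, and let Γ ∪ {φ} be a set of formulas such that for every Kripke model M whose frame is weakly directed and every world w of M, if M, w ⊨ γ for all γ ∈ Γ then M, w ⊨ φ. Then there exist formulas γ₁, …, γ_m ∈ Γ such that ⊢_{K+.2} γ₁ → (γ₂ → … (γ_m → φ)…). -/

import Mathlib

/-- Formulas of multi-agent modal logic: ⊥, variables, ∨, ∧, →, K_i. -/
inductive Form (α P : Type) : Type
  | fls : Form α P
  | var : P → Form α P
  | dis : Form α P → Form α P → Form α P
  | con : Form α P → Form α P → Form α P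
  | imp : Form α P → Form α P → Form α P
  | box : α → Form α P → Form α P

namespace Form

/-- Negation ¬φ := φ → ⊥. -/
def neg {α P : Type} (p : Form α P) : Form α P := p.imp .fls

/-- Verum ⊤ := ¬⊥. -/
def top {α P : Type} : Form α P := neg .fls

/-- Biconditional φ ↔ ψ := (φ → ψ) ∧ (ψ → φ). -/
def iff' {α P : Type} (p q : Form α P) : Form α P := (p.imp q).con (q.imp p)

/-- Dual operator L_i φ := ¬ K_i ¬ φ. -/
def dia {α P : Type} (i : α) (p : Form α P) : Form α P := (Form.box i p.neg).neg

end Form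

/-- Boolean evaluation of a formula, treating modal subformulas as atoms
(interpreted by `h`). -/
def beval {α P : Type} (g : P → Bool) (h : Form α P → Bool) : Form α P → Bool
  | .fls => false
  | .var x => g x
  | .dis p q => beval g h p || beval g h q
  | .con p q => beval g h p && beval g h q
  | .imp p q => !(beval g h p) || beval g h q
  | .box i p => h (.box i p)

/-- A propositional tautology: true under every valuation of the variables and
of the modal subformulas. -/
def Tautology {α P : Type} (p : Form α P) : Prop := ∀ g h, beval g h p = true

/-- Hilbert system K + the axiom set `Ax`: all propositional tautologies,
axiom K, the extra axioms, closed under Modus Ponens and Necessitation. -/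
inductive Prf {α P : Type} (Ax : Form α P → Prop) : Form α P → Prop
  | taut {p} : Tautology p → Prf Ax p
  | axK {i p q} : Prf Ax (((Form.box i (p.imp q)).con (Form.box i p)).imp (Form.box i q))
  | ax {p} : Ax p → Prf Ax p
  | mp {p q} : Prf Ax (p.imp q) → Prf Ax p → Prf Ax q
  | nec {i p} : Prf Ax p → Prf Ax (Form.box i p)

/-- The empty axiom set: `Prf KAx` is the pure system K. -/
def KAx {α P : Type} : Form α P → Prop := fun _ => False

/-- Axiom T: K_i φ → φ. -/
def AxT {α P : Type} (φ : Form α P) : Prop := ∃ i p, φ = (Form.box i p).imp p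

/-- Axiom 4: K_i φ → K_i K_i φ. -/
def Ax4 {α P : Type} (φ : Form α P) : Prop :=
  ∃ i p, φ = (Form.box i p).imp (Form.box i (Form.box i p))

/-- Axiom .2: ¬K_i ¬K_i φ → K_i ¬K_i ¬φ. -/
def Ax2 {α P : Type} (φ : Form α P) : Prop :=
  ∃ i p, φ = ((Form.box i (Form.box i p).neg).neg).imp (Form.box i (Form.box i p.neg).neg)

/-- Axioms of S4: T and 4. -/
def AxS4 {α P : Type} (φ : Form α P) : Prop := AxT φ ∨ Ax4 φ

/-- Axioms of S4.2: T, 4 and .2. -/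
def AxS42 {α P : Type} (φ : Form α P) : Prop := AxT φ ∨ Ax4 φ ∨ Ax2 φ

/-- Iterated implication ψ₁ → (ψ₂ → … (ψ_k → φ)…); for the empty list it is φ. -/
def imply {α P : Type} : List (Form α P) → Form α P → Form α P
  | [], q => q
  | p :: l, q => p.imp (imply l q)

/-- Conjunction ψ₁ ∧ … ∧ ψ_k (∧ ⊤); for the empty list it is ⊤. -/
def conj {α P : Type} : List (Form α P) → Form α P
  | [] => Form.top
  | p :: l => p.con (conj l)

/-- A set Γ is consistent w.r.t. K+Ax if no finite list of its elements derives ⊥. -/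
def Consistent {α P : Type} (Ax : Form α P → Prop) (Γ : Set (Form α P)) : Prop :=
  ¬ ∃ l : List (Form α P), (∀ ψ ∈ l, ψ ∈ Γ) ∧ Prf Ax (imply l Form.fls)

/-- Γ is maximal consistent if it is consistent and contains φ or ¬φ for every φ. -/
def MaximalConsistent {α P : Type} (Ax : Form α P → Prop) (Γ : Set (Form α P)) : Prop :=
  Consistent Ax Γ ∧ ∀ φ : Form α P, φ ∈ Γ ∨ Form.neg φ ∈ Γ

/-- A Kripke model: a valuation and one accessibility relation per agent. -/
structure Kripke (α P W : Type) where
  val : W → P → Prop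
  rel : α → W → W → Prop

/-- Satisfaction of a formula at a world of a Kripke model. -/
def sat {α P W : Type} (M : Kripke α P W) : W → Form α P → Prop
  | _, .fls => False
  | w, .var x => M.val w x
  | w, .dis p q => sat M w p ∨ sat M w q
  | w, .con p q => sat M w p ∧ sat M w q
  | w, .imp p q => sat M w p → sat M w q
  | w, .box i p => ∀ v, M.rel i w v → sat M v p

/-- A family of relations is weakly directed (confluent). -/
def WeaklyDirected {α W : Type} (R : α → W → W → Prop) : Prop :=
  ∀ i v w u, R i v w → R i v u → ∃ x, R i w x ∧ R i u x

/-- Each relation is reflexive. -/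
def ReflexiveRel {α W : Type} (R : α → W → W → Prop) : Prop :=
  ∀ i w, R i w w

/-- Each relation is transitive. -/
def TransitiveRel {α W : Type} (R : α → W → W → Prop) : Prop :=
  ∀ i u v w, R i u v → R i v w → R i u w

section Helpers

open Classical

variable {α P : Type} {Ax : Form α P → Prop}

/- ### beval lemmas -/

lemma beval_imp_true {g h} {p q : Form α P} :
    beval g h (p.imp q) = true ↔ (beval g h p = true → beval g h q = true) := by
  simp [beval]; cases beval g h p <;> simp

lemma beval_neg_true {g h} {p : Form α P} :
    beval g h p.neg = true ↔ ¬ (beval g h p = true) := by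
  simp [Form.neg, beval]

lemma beval_con_true {g h} {p q : Form α P} :
    beval g h (p.con q) = true ↔ (beval g h p = true ∧ beval g h q = true) := by
  simp [beval]

lemma beval_dis_true {g h} {p q : Form α P} :
    beval g h (p.dis q) = true ↔ (beval g h p = true ∨ beval g h q = true) := by
  simp [beval]

lemma beval_fls {g h : _} : beval g h (Form.fls : Form α P) = true ↔ False := by
  simp [beval]

lemma beval_conj_true {g h} {l : List (Form α P)} :
    beval g h (conj l) = true ↔ ∀ ψ ∈ l, beval g h ψ = true := by
  induction l with
  | nil => simp [conj, Form.top, beval_neg_true, beval_fls]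
  | cons p l ih => simp [conj, beval_con_true, ih]

lemma beval_imply_true {g h} {l : List (Form α P)} {q : Form α P} :
    beval g h (imply l q) = true ↔
      ((∀ ψ ∈ l, beval g h ψ = true) → beval g h q = true) := by
  induction l with
  | nil => simp [imply]
  | cons p l ih =>
    simp only [imply, beval_imp_true, ih, List.mem_cons]
    constructor
    · intro a b; exact a (b p (Or.inl rfl)) (fun ψ hψ => b ψ (Or.inr hψ))
    · intro a b c; exact a fun ψ hψ => hψ.elim (fun e => e ▸ b) (c ψ)

/- ### basic Prf lemmas -/

lemma prf_taut_imp {p q : Form α P}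
    (hpq : ∀ g h, beval g h p = true → beval g h q = true) : Prf Ax (p.imp q) :=
  Prf.taut (fun g h => beval_imp_true.2 (hpq g h))

lemma imply_weaken {l l' : List (Form α P)} {q : Form α P}
    (hsub : ∀ ψ ∈ l, ψ ∈ l') (hprf : Prf Ax (imply l q)) : Prf Ax (imply l' q) := by
  refine Prf.mp (prf_taut_imp ?_) hprf
  intro g h
  rw [beval_imply_true, beval_imply_true]
  exact fun h1 h2 => h1 fun ψ hψ => h2 ψ (hsub ψ hψ)

lemma prf_imply_of_prf {l : List (Form α P)} {q : Form α P}
    (hq : Prf Ax q) : Prf Ax (imply l q) :=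
  imply_weaken (l := []) (by simp) hq

lemma imply_mp {l : List (Form α P)} {p q : Form α P}
    (h1 : Prf Ax (imply l (p.imp q))) (h2 : Prf Ax (imply l p)) :
    Prf Ax (imply l q) := by
  have t : Prf Ax ((imply l (p.imp q)).imp ((imply l p).imp (imply l q))) := by
    apply Prf.taut; intro g h
    rw [beval_imp_true, beval_imp_true, beval_imply_true, beval_imply_true,
      beval_imply_true]
    intro a b c
    exact beval_imp_true.1 (a c) (b c)
  exact Prf.mp (Prf.mp t h1) h2

lemma imply_append {l₁ l₂ : List (Form α P)} {q : Form α P} :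
    imply (l₁ ++ l₂) q = imply l₁ (imply l₂ q) := by
  induction l₁ with
  | nil => rfl
  | cons p l ih => simp [imply, ih]

/- ### modal lemmas -/

lemma prf_boxK {i : α} {p q : Form α P} :
    Prf Ax ((Form.box i (p.imp q)).imp ((Form.box i p).imp (Form.box i q))) := by
  have t : Prf Ax ((((Form.box i (p.imp q)).con (Form.box i p)).imp (Form.box i q)).imp
      ((Form.box i (p.imp q)).imp ((Form.box i p).imp (Form.box i q)))) := by
    apply Prf.taut; intro g h
    simp only [beval_imp_true, beval_con_true]
    tauto
  exact Prf.mp t Prf.axK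

lemma prf_imp_trans2 {A B C D : Form α P}
    (h1 : Prf Ax (A.imp (B.imp C))) (h2 : Prf Ax (C.imp D)) :
    Prf Ax (A.imp (B.imp D)) := by
  have t : Prf Ax ((A.imp (B.imp C)).imp ((C.imp D).imp (A.imp (B.imp D)))) := by
    apply Prf.taut; intro g h
    simp only [beval_imp_true]; tauto
  exact Prf.mp (Prf.mp t h1) h2

lemma box_imply_dist {i : α} {l : List (Form α P)} {p : Form α P} :
    Prf Ax ((Form.box i (imply l p)).imp (imply (l.map (Form.box i)) (Form.box i p))) := by
  induction l with
  | nil =>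
    exact prf_taut_imp (fun g h hx => hx)
  | cons q l ih =>
    simp only [imply, List.map]
    exact prf_imp_trans2 (prf_boxK) ih

lemma box_imply {i : α} {l : List (Form α P)} {p : Form α P}
    (h : Prf Ax (imply l p)) :
    Prf Ax (imply (l.map (Form.box i)) (Form.box i p)) :=
  Prf.mp box_imply_dist (Prf.nec h)

end Helpers
section Helpers2

open Classical

variable {α P : Type} {Ax : Form α P → Prop}

lemma exists_prf_neg_of_inconsistent {Γ : Set (Form α P)} {ψ : Form α P}
    (h : ¬ Consistent Ax (Γ ∪ {ψ})) :
    ∃ l : List (Form α P), (∀ x ∈ l, x ∈ Γ) ∧ Prf Ax (imply l ψ.neg) := by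
  classical
  rw [Consistent, not_not] at h
  obtain ⟨l0, hl0, hprf⟩ := h
  refine ⟨l0.filter (fun x => x ≠ ψ), ?_, ?_⟩
  · intro x hx
    rw [List.mem_filter] at hx
    rcases hl0 x hx.1 with h1 | h1
    · exact h1
    · exact absurd h1 (by simpa using hx.2)
  · have hsub : ∀ x ∈ l0, x ∈ (l0.filter (fun x => x ≠ ψ)) ++ [ψ] := by
      intro x hx
      by_cases hxψ : x = ψ
      · simp [hxψ]
      · simp [List.mem_filter, hx, hxψ]
    have := imply_weaken (Ax := Ax) hsub hprf
    rwa [imply_append] at this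

lemma consistent_of_not_prf {Γ : Set (Form α P)} {φ : Form α P}
    (h : ¬ ∃ l : List (Form α P), (∀ γ ∈ l, γ ∈ Γ) ∧ Prf Ax (imply l φ)) :
    Consistent Ax (Γ ∪ {φ.neg}) := by
  intro hcon
  apply h
  obtain ⟨l, hl, hprf⟩ :=
    exists_prf_neg_of_inconsistent (Γ := Γ) (ψ := φ.neg) (fun hc => hc hcon)
  refine ⟨l, hl, imply_mp (l := l) ?_ hprf⟩
  apply prf_imply_of_prf
  apply prf_taut_imp
  intro g hb
  rw [beval_neg_true, beval_neg_true]
  tauto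

/-- Union of a nonempty chain of consistent sets is consistent. -/
lemma chain_union_consistent {c : Set (Set (Form α P))}
    (hc : IsChain (· ⊆ ·) c) (hne : c.Nonempty)
    (hcons : ∀ t ∈ c, Consistent Ax t) : Consistent Ax (⋃₀ c) := by
  rintro ⟨l, hl, hprf⟩
  have key : ∀ l' : List (Form α P), (∀ ψ ∈ l', ψ ∈ ⋃₀ c) →
      ∃ t ∈ c, ∀ ψ ∈ l', ψ ∈ t := by
    intro l' hl'
    induction l' with
    | nil => exact ⟨hne.choose, hne.choose_spec, by simp⟩
    | cons p l'' ih =>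
      obtain ⟨t₂, ht₂, hsub⟩ := ih (fun ψ hψ => hl' ψ (List.mem_cons_of_mem _ hψ))
      obtain ⟨t₁, ht₁, hp⟩ := hl' p List.mem_cons_self
      rcases hc.total ht₁ ht₂ with h12 | h21
      · exact ⟨t₂, ht₂, by
          intro ψ hψ
          rcases List.mem_cons.1 hψ with rfl | hψ
          · exact h12 hp
          · exact hsub ψ hψ⟩
      · exact ⟨t₁, ht₁, by
          intro ψ hψ
          rcases List.mem_cons.1 hψ with rfl | hψ
          · exact hp
          · exact h21 (hsub ψ hψ)⟩
  obtain ⟨t, htc, hsub⟩ := key l hl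
  exact hcons t htc ⟨l, hsub, hprf⟩

/-- Lindenbaum's lemma. -/
lemma lindenbaum {Γ : Set (Form α P)} (h : Consistent Ax Γ) :
    ∃ Δ : Set (Form α P), Γ ⊆ Δ ∧ MaximalConsistent Ax Δ := by
  classical
  obtain ⟨m, hΓm, hm⟩ := zorn_subset_nonempty {Δ | Consistent Ax Δ}
    (fun c hcS hchain hcne =>
      ⟨⋃₀ c, chain_union_consistent hchain hcne (fun t ht => hcS ht),
        fun s hs => Set.subset_sUnion_of_mem hs⟩) Γ h
  refine ⟨m, hΓm, hm.1, ?_⟩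
  intro ψ
  by_contra hcon
  push_neg at hcon
  obtain ⟨h1, h2⟩ := hcon
  have i1 : ¬ Consistent Ax (m ∪ {ψ}) := by
    intro hc
    have := hm.2 (y := m ∪ {ψ}) hc Set.subset_union_left
    exact h1 (this (Set.mem_union_right _ rfl))
  have i2 : ¬ Consistent Ax (m ∪ {ψ.neg}) := by
    intro hc
    have := hm.2 (y := m ∪ {ψ.neg}) hc Set.subset_union_left
    exact h2 (this (Set.mem_union_right _ rfl))
  obtain ⟨l₁, hl₁, hp₁⟩ := exists_prf_neg_of_inconsistent i1
  obtain ⟨l₂, hl₂, hp₂⟩ := exists_prf_neg_of_inconsistent i2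
  apply hm.1
  refine ⟨l₁ ++ l₂, by
    intro x hx
    rcases List.mem_append.1 hx with hx | hx
    · exact hl₁ x hx
    · exact hl₂ x hx, ?_⟩
  have w₁ : Prf Ax (imply (l₁ ++ l₂) ψ.neg) :=
    imply_weaken (fun x hx => List.mem_append.2 (Or.inl hx)) hp₁
  have w₂ : Prf Ax (imply (l₁ ++ l₂) ψ.neg.neg) :=
    imply_weaken (fun x hx => List.mem_append.2 (Or.inr hx)) hp₂
  have t : Prf Ax (imply (l₁ ++ l₂) (ψ.neg.imp Form.fls)) := w₂
  exact imply_mp t w₁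

/- ### Maximal consistent set properties -/

variable {Δ : Set (Form α P)}

lemma mcs_mem_of_prf_imply (hΔ : MaximalConsistent Ax Δ) {l : List (Form α P)} {q : Form α P}
    (hl : ∀ x ∈ l, x ∈ Δ) (hprf : Prf Ax (imply l q)) : q ∈ Δ := by
  rcases hΔ.2 q with hq | hq
  · exact hq
  · exfalso
    apply hΔ.1
    refine ⟨l ++ [q.neg], ?_, ?_⟩
    · intro x hx
      rcases List.mem_append.1 hx with hx | hx
      · exact hl x hx
      · simp at hx; subst hx; exact hq
    · rw [imply_append]
      refine imply_mp ?_ hprf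
      apply prf_imply_of_prf
      apply prf_taut_imp
      intro g hb hq'
      simp only [imply, beval_imp_true, beval_neg_true, beval_fls]
      tauto

lemma mcs_mem_of_prf (hΔ : MaximalConsistent Ax Δ) {q : Form α P} (hprf : Prf Ax q) : q ∈ Δ :=
  mcs_mem_of_prf_imply hΔ (l := []) (by simp) hprf

lemma mcs_fls_not_mem (hΔ : MaximalConsistent Ax Δ) : Form.fls ∉ Δ := by
  intro hf
  apply hΔ.1
  exact ⟨[Form.fls], by simpa using hf, prf_taut_imp (fun g h hb => hb)⟩

lemma mcs_neg_mem_iff (hΔ : MaximalConsistent Ax Δ) {p : Form α P} : p.neg ∈ Δ ↔ p ∉ Δ := by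
  constructor
  · intro hn hp
    apply mcs_fls_not_mem hΔ
    refine mcs_mem_of_prf_imply hΔ (l := [p.neg, p]) ?_ ?_
    · intro x hx
      simp only [List.mem_cons, List.not_mem_nil, or_false] at hx
      rcases hx with rfl | rfl
      · exact hn
      · exact hp
    · apply Prf.taut; intro g hb
      simp only [imply, beval_imp_true, beval_neg_true, beval_fls]
      tauto
  · intro hp
    rcases hΔ.2 p with h | h
    · exact absurd h hp
    · exact h

lemma mcs_imp_mem_iff (hΔ : MaximalConsistent Ax Δ) {p q : Form α P} :
    p.imp q ∈ Δ ↔ (p ∈ Δ → q ∈ Δ) := by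
  constructor
  · intro hpq hp
    refine mcs_mem_of_prf_imply hΔ (l := [p.imp q, p]) ?_ ?_
    · intro x hx
      simp only [List.mem_cons, List.not_mem_nil, or_false] at hx
      rcases hx with rfl | rfl
      · exact hpq
      · exact hp
    · apply Prf.taut; intro g hb
      simp only [imply, beval_imp_true]
      tauto
  · intro hpq
    by_cases hp : p ∈ Δ
    · refine mcs_mem_of_prf_imply hΔ (l := [q]) (by simpa using hpq hp) ?_
      apply Prf.taut; intro g hb
      simp only [imply, beval_imp_true]
      tauto
    · refine mcs_mem_of_prf_imply hΔ (l := [p.neg])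
        (by simpa using (mcs_neg_mem_iff hΔ).2 hp) ?_
      apply Prf.taut; intro g hb
      simp only [imply, beval_imp_true, beval_neg_true]
      tauto

lemma mcs_con_mem_iff (hΔ : MaximalConsistent Ax Δ) {p q : Form α P} :
    p.con q ∈ Δ ↔ (p ∈ Δ ∧ q ∈ Δ) := by
  constructor
  · intro hpq
    constructor
    · refine mcs_mem_of_prf_imply hΔ (l := [p.con q]) (by simpa using hpq) ?_
      apply Prf.taut; intro g hb
      simp only [imply, beval_imp_true, beval_con_true]
      tauto
    · refine mcs_mem_of_prf_imply hΔ (l := [p.con q]) (by simpa using hpq) ?_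
      apply Prf.taut; intro g hb
      simp only [imply, beval_imp_true, beval_con_true]
      tauto
  · rintro ⟨hp, hq⟩
    refine mcs_mem_of_prf_imply hΔ (l := [p, q]) ?_ ?_
    · intro x hx
      simp only [List.mem_cons, List.not_mem_nil, or_false] at hx
      rcases hx with rfl | rfl
      · exact hp
      · exact hq
    · apply Prf.taut; intro g hb
      simp only [imply, beval_imp_true, beval_con_true]
      tauto

lemma mcs_dis_mem_iff (hΔ : MaximalConsistent Ax Δ) {p q : Form α P} :
    p.dis q ∈ Δ ↔ (p ∈ Δ ∨ q ∈ Δ) := by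
  constructor
  · intro hpq
    by_contra hcon
    push_neg at hcon
    apply mcs_fls_not_mem hΔ
    refine mcs_mem_of_prf_imply hΔ (l := [p.dis q, p.neg, q.neg]) ?_ ?_
    · intro x hx
      simp only [List.mem_cons, List.not_mem_nil, or_false] at hx
      rcases hx with rfl | rfl | rfl
      · exact hpq
      · exact (mcs_neg_mem_iff hΔ).2 hcon.1
      · exact (mcs_neg_mem_iff hΔ).2 hcon.2
    · apply Prf.taut; intro g hb
      simp only [imply, beval_imp_true, beval_neg_true, beval_dis_true, beval_fls]
      tauto
  · intro hpq
    rcases hpq with hp | hp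
    · refine mcs_mem_of_prf_imply hΔ (l := [p]) (by simpa using hp) ?_
      apply Prf.taut; intro g hb
      simp only [imply, beval_imp_true, beval_dis_true]
      tauto
    · refine mcs_mem_of_prf_imply hΔ (l := [q]) (by simpa using hp) ?_
      apply Prf.taut; intro g hb
      simp only [imply, beval_imp_true, beval_dis_true]
      tauto

end Helpers2
section Canonical

variable {α P : Type} {Ax : Form α P → Prop}

/-- Worlds of the canonical model. -/
def CanW (α P : Type) (Ax : Form α P → Prop) : Type :=
  {Δ : Set (Form α P) // MaximalConsistent Ax Δ}

/-- The canonical model. -/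
def canM (α P : Type) (Ax : Form α P → Prop) : Kripke α P (CanW α P Ax) where
  val w x := Form.var x ∈ w.1
  rel i w v := ∀ p : Form α P, Form.box i p ∈ w.1 → p ∈ v.1

/-- Existence lemma. -/
lemma existence {Δ : Set (Form α P)} (hΔ : MaximalConsistent Ax Δ) {i : α}
    {p : Form α P} (hp : Form.box i p ∉ Δ) :
    ∃ Θ : Set (Form α P), MaximalConsistent Ax Θ ∧
      (∀ q : Form α P, Form.box i q ∈ Δ → q ∈ Θ) ∧ p ∉ Θ := by
  have hcons : Consistent Ax ({q : Form α P | Form.box i q ∈ Δ} ∪ {p.neg}) := by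
    by_contra hin
    obtain ⟨l, hl, hprf⟩ := exists_prf_neg_of_inconsistent hin
    have hprf' : Prf Ax (imply l p) := by
      refine imply_mp ?_ hprf
      apply prf_imply_of_prf
      apply prf_taut_imp
      intro g hb
      simp only [beval_neg_true]
      tauto
    have hbox : Prf Ax (imply (l.map (Form.box i)) (Form.box i p)) := box_imply hprf'
    apply hp
    refine mcs_mem_of_prf_imply hΔ ?_ hbox
    intro x hx
    rw [List.mem_map] at hx
    obtain ⟨y, hy, rfl⟩ := hx
    exact hl y hy
  obtain ⟨Θ, hsub, hΘ⟩ := lindenbaum hcons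
  refine ⟨Θ, hΘ, fun q hq => hsub (Or.inl hq), ?_⟩
  intro hpΘ
  have : p.neg ∈ Θ := hsub (Or.inr rfl)
  exact (mcs_neg_mem_iff hΘ).1 this hpΘ

/-- Truth lemma. -/
lemma truth_lemma (ψ : Form α P) (w : CanW α P Ax) :
    sat (canM α P Ax) w ψ ↔ ψ ∈ w.1 := by
  induction ψ generalizing w with
  | fls => simpa [sat] using mcs_fls_not_mem w.2
  | var x => simp [sat, canM]
  | dis p q ihp ihq => rw [mcs_dis_mem_iff w.2]; simp [sat, ihp, ihq]
  | con p q ihp ihq => rw [mcs_con_mem_iff w.2]; simp [sat, ihp, ihq]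
  | imp p q ihp ihq => rw [mcs_imp_mem_iff w.2]; simp [sat, ihp, ihq]
  | box i p ihp =>
    constructor
    · intro hs
      by_contra hb
      obtain ⟨Θ, hΘ, hrel, hpΘ⟩ := existence w.2 hb
      exact hpΘ ((ihp ⟨Θ, hΘ⟩).1 (hs ⟨Θ, hΘ⟩ hrel))
    · intro hb v hrel
      exact (ihp v).2 (hrel p hb)

/-- The canonical frame of K+.2 is weakly directed. -/
lemma canonical_weakly_directed : WeaklyDirected (canM α P (Ax2 (α := α) (P := P))).rel := by
  classical
  intro i v w u hvw hvu
  have hcons : Consistent Ax2 ({p : Form α P | Form.box i p ∈ w.1} ∪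
      {q : Form α P | Form.box i q ∈ u.1}) := by
    rintro ⟨l, hl, hprf⟩
    set lw := l.filter (fun x => decide (Form.box i x ∈ w.1)) with hlw
    set lu := l.filter (fun x => ¬ decide (Form.box i x ∈ w.1)) with hlu
    have hlwmem : ∀ x ∈ lw, Form.box i x ∈ w.1 := by
      intro x hx
      rw [hlw, List.mem_filter] at hx
      simpa using hx.2
    have hlumem : ∀ x ∈ lu, Form.box i x ∈ u.1 := by
      intro x hx
      rw [hlu, List.mem_filter] at hx
      have hxw : Form.box i x ∉ w.1 := by simpa using hx.2
      rcases hl x hx.1 with h | h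
      · exact absurd h hxw
      · exact h
    have hsub : ∀ x ∈ l, x ∈ lu ++ lw := by
      intro x hx
      rw [List.mem_append, hlw, hlu, List.mem_filter, List.mem_filter]
      by_cases hc : Form.box i x ∈ w.1 <;> simp [hx, hc]
    have hprf2 : Prf Ax2 (imply lu (imply lw Form.fls)) := by
      rw [← imply_append]
      exact imply_weaken hsub hprf
    -- from lw we can prove its conjunction
    have hconj : Prf Ax2 (imply lw (conj lw)) := by
      apply Prf.taut
      intro g hb
      rw [beval_imply_true, beval_conj_true]
      exact fun h => h
    -- from lu we can refute the conjunction of lw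
    have hneg : Prf Ax2 (imply lu (conj lw).neg) := by
      refine imply_mp ?_ hprf2
      apply prf_imply_of_prf
      apply prf_taut_imp
      intro g hb
      rw [beval_imply_true, beval_neg_true, beval_conj_true]
      intro h1 h2
      exact absurd (h1 h2) (by rw [beval_fls]; exact id)
    set a := conj lw with ha
    -- box a ∈ w
    have hboxa : Form.box i a ∈ w.1 := by
      refine mcs_mem_of_prf_imply w.2 ?_ (box_imply (i := i) hconj)
      intro x hx
      rw [List.mem_map] at hx
      obtain ⟨y, hy, rfl⟩ := hx
      exact hlwmem y hy
    -- box (neg a) ∈ u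
    have hboxna : Form.box i a.neg ∈ u.1 := by
      refine mcs_mem_of_prf_imply u.2 ?_ (box_imply (i := i) hneg)
      intro x hx
      rw [List.mem_map] at hx
      obtain ⟨y, hy, rfl⟩ := hx
      exact hlumem y hy
    -- ◇□a ∈ v
    have h1 : (Form.box i (Form.box i a).neg).neg ∈ v.1 := by
      rw [mcs_neg_mem_iff v.2]
      intro hmem
      have := hvw _ hmem
      exact (mcs_neg_mem_iff w.2).1 this hboxa
    -- apply .2
    have hax : Prf (Ax2 (α := α) (P := P))
        (((Form.box i (Form.box i a).neg).neg).imp (Form.box i (Form.box i a.neg).neg)) :=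
      Prf.ax ⟨i, a, rfl⟩
    have h2 : Form.box i (Form.box i a.neg).neg ∈ v.1 :=
      (mcs_imp_mem_iff v.2).1 (mcs_mem_of_prf v.2 hax) h1
    have h3 : (Form.box i a.neg).neg ∈ u.1 := hvu _ h2
    exact (mcs_neg_mem_iff u.2).1 h3 hboxna
  obtain ⟨Θ, hsub, hΘ⟩ := lindenbaum hcons
  exact ⟨⟨Θ, hΘ⟩, fun p hp => hsub (Or.inl hp), fun p hp => hsub (Or.inr hp)⟩

end Canonical
/-- Completeness of K+.2 from premises: if every world of every
Kripke model with a weakly directed frame that satisfies all of Γ satisfies φ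
(propositional symbols and agent labels countable), then some γ₁,…,γ_m ∈ Γ give
⊢_{K+.2} γ₁ → (γ₂ → … (γ_m → φ)…). -/
theorem imply_completeness_K2 {α P : Type} [Countable α] [Countable P]
    (Γ : Set (Form α P)) (φ : Form α P)
    (h : ∀ (W : Type) (M : Kripke α P W), Nonempty W → WeaklyDirected M.rel →
         ∀ w : W, (∀ γ ∈ Γ, sat M w γ) → sat M w φ) :
    ∃ l : List (Form α P), (∀ γ ∈ l, γ ∈ Γ) ∧ Prf Ax2 (imply l φ) := by
  by_contra h0
  have hcons : Consistent Ax2 (Γ ∪ {φ.neg}) := consistent_of_not_prf h0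
  obtain ⟨Δ, hsub, hΔ⟩ := lindenbaum hcons
  set w : CanW α P Ax2 := ⟨Δ, hΔ⟩ with hw
  have hsat : sat (canM α P Ax2) w φ := by
    refine h _ _ ⟨w⟩ canonical_weakly_directed w ?_
    intro γ hγ
    exact (truth_lemma γ w).2 (hsub (Or.inl hγ))
  have hφ : φ ∈ Δ := (truth_lemma φ w).1 hsat
  have hnphi : φ.neg ∈ Δ := hsub (Or.inr rfl)
  exact (mcs_neg_mem_iff hΔ).1 hnphi hφ
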